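/- Define the vector field W on ℝ² \ {0} by W(x) = ν Δu(x) − ((u·∇)u)(x), where Δu is the componentwise Laplacian and ((u·∇)u)(x) is the derivative of u at x applied to u(x). Then for every x ≠ 0 the scalar curl of W satisfies (∂₁W₂ − ∂₂W₁)(x) = −(ν/|x|) · Q'(|x|), where Q(ρ) = ρ·(−α₂ + (α₁ − α₂(ρ − δ))/ρ − h(ρ − δ)/ρ²), and there exists r₀ > 0 such that this scalar curl is nonzero for all x with δ < |x| < δ + r₀; in particular W is not the gradient of any C¹ function on any open set meeting the region δ < |x| < δ + r₀. -/

import Mathlib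

noncomputable section

/-- Poiseuille-type speed profile `h(r) = α₁ r − (α₂/2) r²`. -/
def prof (α₁ α₂ r : ℝ) : ℝ := α₁ * r - α₂ / 2 * r ^ 2

/-- Euclidean norm on `ℝ × ℝ`. -/
def nrm (x : ℝ × ℝ) : ℝ := Real.sqrt (x.1 ^ 2 + x.2 ^ 2)

/-- Parallel laminar flow `u(x) = h(|x| − δ) (x₂, −x₁)/|x|` around the origin. -/
def vel (δ α₁ α₂ : ℝ) (x : ℝ × ℝ) : ℝ × ℝ :=
  (prof α₁ α₂ (nrm x - δ) / nrm x) • (x.2, -x.1)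

/-- Componentwise Laplacian of a planar vector field. -/
def lap (f : ℝ × ℝ → ℝ × ℝ) (x : ℝ × ℝ) : ℝ × ℝ :=
  fderiv ℝ (fun y => fderiv ℝ f y (1, 0)) x (1, 0) +
  fderiv ℝ (fun y => fderiv ℝ f y (0, 1)) x (0, 1)

/-- Gradient of a scalar function on `ℝ × ℝ`. -/
def grad (p : ℝ × ℝ → ℝ) (x : ℝ × ℝ) : ℝ × ℝ :=
  (fderiv ℝ p x (1, 0), fderiv ℝ p x (0, 1))

/-- Scalar curl `∂₁W₂ − ∂₂W₁` of a planar vector field. -/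
def scurl (W : ℝ × ℝ → ℝ × ℝ) (x : ℝ × ℝ) : ℝ :=
  fderiv ℝ (fun y => (W y).2) x (1, 0) - fderiv ℝ (fun y => (W y).1) x (0, 1)

/-!
The flow is `u = g(|x|) J x` with angular velocity `g(ρ) = h(ρ - δ)/ρ` and `J x = (x₂, -x₁)`.
For such a circular flow the convective term `(u·∇)u = -g(|x|)² x` is radial, hence curl-free,
while `Δu = (g'' + 3g'/ρ)(|x|) J x = (Q/ρ²)(|x|) J x`. A swirl `a(|x|) J x` has curl
`-(ρ a' + 2a) = -(ρ² a)'/ρ`, which gives `curl W = -(ν/|x|) Q'(|x|)`. For the Poiseuille profile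
`ρ² Q'(ρ) = -(α₂ρ² + α₂ρδ + α₁δ + α₂(ρ - δ)²/2) < 0` when `ρ > δ`, while the curl of the gradient
of a `C¹` function vanishes wherever that gradient is differentiable, by symmetry of second
derivatives.
-/

open Topology ContinuousLinearMap

lemma nrm_sq (x : ℝ × ℝ) : nrm x ^ 2 = x.1 ^ 2 + x.2 ^ 2 :=
  Real.sq_sqrt (by positivity)

lemma nrm_pos {x : ℝ × ℝ} (hx : x ≠ 0) : 0 < nrm x := by
  refine Real.sqrt_pos.2 ?_
  rcases x with ⟨a, b⟩
  have : a ≠ 0 ∨ b ≠ 0 := by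
    by_contra! h
    exact hx (Prod.ext h.1 h.2)
  rcases this with h | h <;> positivity

lemma ne_zero_of_nrm_pos {x : ℝ × ℝ} (h : 0 < nrm x) : x ≠ 0 := by
  rintro rfl
  simp [nrm] at h

def dotL (e : ℝ × ℝ) : ℝ × ℝ →L[ℝ] ℝ := e.1 • fst ℝ ℝ ℝ + e.2 • snd ℝ ℝ ℝ

@[simp] lemma dotL_apply (e v : ℝ × ℝ) : dotL e v = e.1 * v.1 + e.2 * v.2 := by
  simp [dotL]

lemma hasFDerivAt_nrm {x : ℝ × ℝ} (hx : x ≠ 0) : HasFDerivAt nrm ((nrm x)⁻¹ • dotL x) x := by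
  have hsq : HasFDerivAt (fun y : ℝ × ℝ => y.1 ^ 2 + y.2 ^ 2) ((2 : ℝ) • dotL x) x := by
    refine (((hasFDerivAt_fst (p := x)).pow 2).add
      ((hasFDerivAt_snd (p := x)).pow 2)).congr_fderiv ?_
    ext <;> simp [dotL]
  have hsqrt := hsq.sqrt (nrm_sq x ▸ (pow_pos (nrm_pos hx) 2).ne')
  rw [show (fun y : ℝ × ℝ => √(y.1 ^ 2 + y.2 ^ 2)) = nrm from rfl] at hsqrt
  refine hsqrt.congr_fderiv ?_
  ext <;> simp only [one_div, mul_inv_rev, smul_comp, smul_apply, comp_apply, inl_apply, inr_apply,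
    dotL_apply, mul_one, mul_zero, add_zero, zero_add, smul_eq_mul] <;> field_simp <;> rfl

lemma HasDerivAt.hasFDerivAt_comp_nrm {g : ℝ → ℝ} {g' : ℝ} {x : ℝ × ℝ} (hx : x ≠ 0)
    (hg : HasDerivAt g g' (nrm x)) : HasFDerivAt (fun y => g (nrm y)) ((g' / nrm x) • dotL x) x :=
  (hg.comp_hasFDerivAt x (hasFDerivAt_nrm hx)).congr_fderiv (by rw [smul_smul, div_eq_mul_inv])

lemma hasFDerivAt_radial_smul {E : Type*} [NormedAddCommGroup E] [NormedSpace ℝ E]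
    (L : ℝ × ℝ →L[ℝ] E) {a : ℝ → ℝ} {a' : ℝ} {x : ℝ × ℝ} (hx : x ≠ 0)
    (ha : HasDerivAt a a' (nrm x)) :
    HasFDerivAt (fun y => a (nrm y) • L y)
      (a (nrm x) • L + ((a' / nrm x) • dotL x).smulRight (L x)) x :=
  (ha.hasFDerivAt_comp_nrm hx).smul L.hasFDerivAt

def rotL : ℝ × ℝ →L[ℝ] ℝ × ℝ := (snd ℝ ℝ ℝ).prod (-fst ℝ ℝ ℝ)

@[simp] lemma rotL_apply (x : ℝ × ℝ) : rotL x = (x.2, -x.1) := rfl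

def rot (g : ℝ → ℝ) (x : ℝ × ℝ) : ℝ × ℝ := g (nrm x) • rotL x

section Swirl

variable {g g₁ : ℝ → ℝ} {x : ℝ × ℝ}

lemma hasFDerivAt_rot {g' : ℝ} (hx : x ≠ 0) (hg : HasDerivAt g g' (nrm x)) :
    HasFDerivAt (rot g) (g (nrm x) • rotL + ((g' / nrm x) • dotL x).smulRight (rotL x)) x :=
  hasFDerivAt_radial_smul rotL hx hg

lemma fderiv_rot_apply {g' : ℝ} (hx : x ≠ 0) (hg : HasDerivAt g g' (nrm x)) (v : ℝ × ℝ) :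
    fderiv ℝ (rot g) x v = g (nrm x) • rotL v + (g' / nrm x * dotL x v) • rotL x := by
  simp [(hasFDerivAt_rot hx hg).fderiv]

lemma fderiv_rot_apply_rot {g' : ℝ} (hx : x ≠ 0) (hg : HasDerivAt g g' (nrm x)) :
    fderiv ℝ (rot g) x (rot g x) = -(g (nrm x) ^ 2) • x := by
  rw [fderiv_rot_apply hx hg]
  ext <;> simp only [rot, rotL_apply, Prod.smul_mk, smul_eq_mul, mul_neg, dotL_apply,
    Prod.mk_add_mk, neg_smul, Prod.fst_neg, Prod.smul_fst, Prod.snd_neg, Prod.smul_snd] <;> ring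

lemma fderiv_fderiv_rot_apply_self {g₂ : ℝ} (hx : x ≠ 0) (hg : ∀ ρ > 0, HasDerivAt g (g₁ ρ) ρ)
    (hg₁ : HasDerivAt g₁ g₂ (nrm x)) (e : ℝ × ℝ) :
    fderiv ℝ (fun y => fderiv ℝ (rot g) y e) x e =
      (2 * (g₁ (nrm x) / nrm x) * dotL x e) • rotL e +
        ((g₂ - g₁ (nrm x) / nrm x) / nrm x ^ 2 * dotL x e ^ 2 +
          g₁ (nrm x) / nrm x * dotL e e) • rotL x := by
  have hr := nrm_pos hx
  have hev : (fun y => fderiv ℝ (rot g) y e) =ᶠ[𝓝 x]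
      fun y => g (nrm y) • rotL e + (g₁ (nrm y) / nrm y) • (dotL e y • rotL y) := by
    filter_upwards [isOpen_compl_singleton.mem_nhds hx] with y hy
    rw [fderiv_rot_apply hy (hg _ (nrm_pos hy)), smul_smul, dotL_apply, dotL_apply]
    ring_nf
  have hk : HasDerivAt (fun ρ => g₁ ρ / ρ) ((g₂ * nrm x - g₁ (nrm x)) / nrm x ^ 2) (nrm x) := by
    simpa using hg₁.fun_div (hasDerivAt_id' _) hr.ne'
  have hD := (((hg _ hr).hasFDerivAt_comp_nrm hx).smul_const (rotL e)).fun_add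
    ((hk.hasFDerivAt_comp_nrm hx).fun_smul ((dotL e).hasFDerivAt.fun_smul rotL.hasFDerivAt))
  rw [hev.fderiv_eq, hD.fderiv]
  ext <;> simp only [rotL_apply, dotL_apply, smul_add, Prod.smul_mk, smul_eq_mul, mul_neg,
    add_apply, smulRight_apply, smul_apply, Prod.mk_add_mk] <;> field_simp <;> ring

lemma lap_rot {g₂ : ℝ} (hx : x ≠ 0) (hg : ∀ ρ > 0, HasDerivAt g (g₁ ρ) ρ)
    (hg₁ : HasDerivAt g₁ g₂ (nrm x)) :
    lap (rot g) x = (g₂ + 3 * (g₁ (nrm x) / nrm x)) • rotL x := by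
  have hr := (nrm_pos hx).ne'
  have h2 := nrm_sq x
  rw [lap, fderiv_fderiv_rot_apply_self hx hg hg₁, fderiv_fderiv_rot_apply_self hx hg hg₁]
  ext <;> simp only [dotL_apply, mul_one, mul_zero, add_zero, rotL_apply, Prod.smul_mk, smul_eq_mul,
    mul_neg, Prod.mk_add_mk, zero_add, neg_zero] <;> field_simp
  · linear_combination x.2 * (g₁ (nrm x) - g₂ * nrm x) * h2
  · linear_combination x.1 * (g₂ * nrm x - g₁ (nrm x)) * h2

end Swirl

/-- A steady Navier–Stokes flow `u` balances `ν Δu − (u·∇)u` by a pressure gradient. -/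
def nsForce (ν : ℝ) (u : ℝ × ℝ → ℝ × ℝ) (x : ℝ × ℝ) : ℝ × ℝ :=
  ν • lap u x - fderiv ℝ u x (u x)

lemma scurl_of_hasFDerivAt {W : ℝ × ℝ → ℝ × ℝ} {W' : ℝ × ℝ →L[ℝ] ℝ × ℝ} {x : ℝ × ℝ}
    (hW : HasFDerivAt W W' x) : scurl W x = (W' (1, 0)).2 - (W' (0, 1)).1 := by
  rw [scurl, hW.snd.fderiv, hW.fst.fderiv]
  rfl

lemma Filter.EventuallyEq.scurl_eq {W V : ℝ × ℝ → ℝ × ℝ} {x : ℝ × ℝ} (h : W =ᶠ[𝓝 x] V) :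
    scurl W x = scurl V x := by
  have h₁ : (fun y => (W y).1) =ᶠ[𝓝 x] fun y => (V y).1 := h.fun_comp Prod.fst
  have h₂ : (fun y => (W y).2) =ᶠ[𝓝 x] fun y => (V y).2 := h.fun_comp Prod.snd
  rw [scurl, scurl, h₁.fderiv_eq, h₂.fderiv_eq]

section RotAddRadial

variable {a b : ℝ → ℝ} {a' b' : ℝ} {x : ℝ × ℝ}

lemma hasFDerivAt_rot_add_radial (hx : x ≠ 0) (ha : HasDerivAt a a' (nrm x))
    (hb : HasDerivAt b b' (nrm x)) :
    HasFDerivAt (fun y => a (nrm y) • rotL y + b (nrm y) • y)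
      (a (nrm x) • rotL + ((a' / nrm x) • dotL x).smulRight (rotL x) +
        (b (nrm x) • ContinuousLinearMap.id ℝ (ℝ × ℝ) + ((b' / nrm x) • dotL x).smulRight x)) x :=
  (hasFDerivAt_radial_smul rotL hx ha).fun_add (hasFDerivAt_radial_smul (.id ℝ _) hx hb)

lemma scurl_rot_add_radial (hx : x ≠ 0) (ha : HasDerivAt a a' (nrm x))
    (hb : HasDerivAt b b' (nrm x)) :
    scurl (fun y => a (nrm y) • rotL y + b (nrm y) • y) x = -(nrm x * a' + 2 * a (nrm x)) := by
  rw [scurl_of_hasFDerivAt (hasFDerivAt_rot_add_radial hx ha hb)]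
  have hr := (nrm_pos hx).ne'
  simp only [rotL_apply, add_apply, smul_apply, Prod.smul_mk, smul_eq_mul, mul_zero, mul_neg,
    mul_one, smulRight_apply, dotL_apply, add_zero, Prod.mk_add_mk, zero_add, id_apply,
    Prod.snd_add, Prod.smul_snd, neg_zero, Prod.fst_add, Prod.smul_fst, neg_add_rev]
  field_simp
  linear_combination a' * nrm_sq x

end RotAddRadial

section NSForceRot

variable {g g₁ g₂ Q : ℝ → ℝ} {x : ℝ × ℝ}

lemma nsForce_rot (ν : ℝ) (hx : x ≠ 0) (hg : ∀ ρ > 0, HasDerivAt g (g₁ ρ) ρ)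
    (hg₁ : ∀ ρ > 0, HasDerivAt g₁ (g₂ ρ) ρ) :
    nsForce ν (rot g) x =
      (ν * (g₂ (nrm x) + 3 * (g₁ (nrm x) / nrm x))) • rotL x + g (nrm x) ^ 2 • x := by
  have hr := nrm_pos hx
  rw [nsForce, lap_rot hx hg (hg₁ _ hr), fderiv_rot_apply_rot hx (hg _ hr), smul_smul, neg_smul,
    sub_neg_eq_add]

lemma nsForce_rot_eventuallyEq (ν : ℝ) (hx : x ≠ 0) (hg : ∀ ρ > 0, HasDerivAt g (g₁ ρ) ρ)
    (hg₁ : ∀ ρ > 0, HasDerivAt g₁ (g₂ ρ) ρ) (hQ : ∀ ρ > 0, Q ρ = ρ ^ 2 * g₂ ρ + 3 * ρ * g₁ ρ) :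
    nsForce ν (rot g) =ᶠ[𝓝 x]
      fun y => (ν * (Q (nrm y) / nrm y ^ 2)) • rotL y + g (nrm y) ^ 2 • y := by
  filter_upwards [isOpen_compl_singleton.mem_nhds hx] with y hy
  have hr := nrm_pos hy
  rw [nsForce_rot ν hy hg hg₁, hQ _ hr]
  congr 2
  field_simp

variable {q' : ℝ}

theorem scurl_nsForce_rot (ν : ℝ) (hx : x ≠ 0) (hg : ∀ ρ > 0, HasDerivAt g (g₁ ρ) ρ)
    (hg₁ : ∀ ρ > 0, HasDerivAt g₁ (g₂ ρ) ρ) (hQ : ∀ ρ > 0, Q ρ = ρ ^ 2 * g₂ ρ + 3 * ρ * g₁ ρ)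
    (hQ' : HasDerivAt Q q' (nrm x)) :
    scurl (nsForce ν (rot g)) x = -(ν / nrm x) * q' := by
  have hr := nrm_pos hx
  have ha := (hQ'.fun_div (hasDerivAt_pow 2 _) (pow_pos hr 2).ne').const_mul ν
  rw [(nsForce_rot_eventuallyEq ν hx hg hg₁ hQ).scurl_eq,
    scurl_rot_add_radial hx ha ((hg _ hr).fun_pow 2)]
  field_simp
  ring

lemma differentiableAt_nsForce_rot (ν : ℝ) (hx : x ≠ 0) (hg : ∀ ρ > 0, HasDerivAt g (g₁ ρ) ρ)
    (hg₁ : ∀ ρ > 0, HasDerivAt g₁ (g₂ ρ) ρ) (hQ : ∀ ρ > 0, Q ρ = ρ ^ 2 * g₂ ρ + 3 * ρ * g₁ ρ)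
    (hQ' : HasDerivAt Q q' (nrm x)) :
    DifferentiableAt ℝ (nsForce ν (rot g)) x := by
  have hr := nrm_pos hx
  have ha := (hQ'.fun_div (hasDerivAt_pow 2 _) (pow_pos hr 2).ne').const_mul ν
  exact (hasFDerivAt_rot_add_radial hx ha ((hg _ hr).fun_pow 2)).differentiableAt
    |>.congr_of_eventuallyEq (nsForce_rot_eventuallyEq ν hx hg hg₁ hQ)

end NSForceRot

lemma scurl_eq_zero_of_eqOn_grad {W : ℝ × ℝ → ℝ × ℝ} {p : ℝ × ℝ → ℝ} {U : Set (ℝ × ℝ)}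
    (hU : IsOpen U) (hp : ContDiffOn ℝ 1 p U) (hgrad : ∀ y ∈ U, grad p y = W y) {x : ℝ × ℝ}
    (hx : x ∈ U) (hW : DifferentiableAt ℝ W x) : scurl W x = 0 := by
  have hp' : ∀ᶠ y in 𝓝 x, HasFDerivAt p ((W y).1 • fst ℝ ℝ ℝ + (W y).2 • snd ℝ ℝ ℝ) y := by
    filter_upwards [hU.mem_nhds hx] with y hy
    have hpy := (hp.contDiffAt (hU.mem_nhds hy)).differentiableAt one_ne_zero
    refine hpy.hasFDerivAt.congr_fderiv ?_
    ext <;> simp [← hgrad y hy, grad]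
  have hW' := hW.hasFDerivAt
  have hsymm := second_derivative_symmetric_of_eventually_of_real hp'
    ((hW'.fst.smul_const (fst ℝ ℝ ℝ)).fun_add (hW'.snd.smul_const (snd ℝ ℝ ℝ))) (1, 0) (0, 1)
  rw [scurl_of_hasFDerivAt hW']
  simpa [sub_eq_zero] using hsymm

section Poiseuille

variable (δ α₁ α₂ : ℝ) {ρ : ℝ}

lemma hasDerivAt_prof_sub : HasDerivAt (fun t => prof α₁ α₂ (t - δ)) (α₁ - α₂ * (ρ - δ)) ρ := by
  have hprof : HasDerivAt (prof α₁ α₂) (α₁ - α₂ * (ρ - δ)) (ρ - δ) :=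
    (((hasDerivAt_id' _).const_mul α₁).fun_sub
      ((hasDerivAt_pow 2 _).const_mul (α₂ / 2))).congr_deriv (by ring)
  exact hprof.comp_sub_const ρ δ

lemma hasDerivAt_prof_deriv_sub : HasDerivAt (fun t => α₁ - α₂ * (t - δ)) (-α₂) ρ := by
  simpa using ((hasDerivAt_id' ρ).sub_const δ).const_mul α₂ |>.const_sub α₁

def angVel (ρ : ℝ) : ℝ := prof α₁ α₂ (ρ - δ) / ρ

def angVel' (ρ : ℝ) : ℝ := (α₁ - α₂ * (ρ - δ)) / ρ - prof α₁ α₂ (ρ - δ) / ρ ^ 2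

def angVel'' (ρ : ℝ) : ℝ :=
  -α₂ / ρ - 2 * (α₁ - α₂ * (ρ - δ)) / ρ ^ 2 + 2 * prof α₁ α₂ (ρ - δ) / ρ ^ 3

lemma hasDerivAt_angVel (hρ : ρ ≠ 0) : HasDerivAt (angVel δ α₁ α₂) (angVel' δ α₁ α₂ ρ) ρ := by
  refine ((hasDerivAt_prof_sub δ α₁ α₂).fun_div (hasDerivAt_id' ρ) hρ).congr_deriv ?_
  simp only [angVel']
  field_simp

lemma hasDerivAt_angVel' (hρ : ρ ≠ 0) :
    HasDerivAt (angVel' δ α₁ α₂) (angVel'' δ α₁ α₂ ρ) ρ := by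
  have hprof := hasDerivAt_prof_sub δ α₁ α₂ (ρ := ρ)
  have hprof' := hasDerivAt_prof_deriv_sub δ α₁ α₂ (ρ := ρ)
  refine ((hprof'.fun_div (hasDerivAt_id' ρ) hρ).fun_sub
    (hprof.fun_div (hasDerivAt_pow 2 ρ) (pow_ne_zero 2 hρ))).congr_deriv ?_
  simp only [angVel'']
  field_simp
  ring

def poiseuilleQ (ρ : ℝ) : ℝ :=
  ρ * (-α₂ + (α₁ - α₂ * (ρ - δ)) / ρ - prof α₁ α₂ (ρ - δ) / ρ ^ 2)

lemma poiseuilleQ_eq (hρ : ρ ≠ 0) :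
    poiseuilleQ δ α₁ α₂ ρ = ρ ^ 2 * angVel'' δ α₁ α₂ ρ + 3 * ρ * angVel' δ α₁ α₂ ρ := by
  simp only [poiseuilleQ, angVel', angVel'']
  field_simp
  ring

lemma hasDerivAt_poiseuilleQ (hρ : ρ ≠ 0) :
    HasDerivAt (poiseuilleQ δ α₁ α₂)
      (-2 * α₂ - (α₁ - α₂ * (ρ - δ)) / ρ + prof α₁ α₂ (ρ - δ) / ρ ^ 2) ρ := by
  have hprof := hasDerivAt_prof_sub δ α₁ α₂ (ρ := ρ)
  have hprof' := hasDerivAt_prof_deriv_sub δ α₁ α₂ (ρ := ρ)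
  refine ((hasDerivAt_id' ρ).fun_mul (((hasDerivAt_const ρ (-α₂)).fun_add
    (hprof'.fun_div (hasDerivAt_id' ρ) hρ)).fun_sub
    (hprof.fun_div (hasDerivAt_pow 2 ρ) (pow_ne_zero 2 hρ)))).congr_deriv ?_
  field_simp
  ring

lemma deriv_poiseuilleQ_neg (hδ : 0 < δ) (hα₁ : 0 < α₁) (hα₂ : 0 < α₂) (hρ : δ < ρ) :
    deriv (poiseuilleQ δ α₁ α₂) ρ < 0 := by
  have hρ₀ : 0 < ρ := hδ.trans hρ
  rw [(hasDerivAt_poiseuilleQ δ α₁ α₂ hρ₀.ne').deriv]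
  have key : -2 * α₂ - (α₁ - α₂ * (ρ - δ)) / ρ + prof α₁ α₂ (ρ - δ) / ρ ^ 2
      = -(α₂ * ρ ^ 2 + α₂ * ρ * δ + α₁ * δ + α₂ / 2 * (ρ - δ) ^ 2) / ρ ^ 2 := by
    simp only [prof]
    field_simp
    ring
  rw [key]
  exact div_neg_of_neg_of_pos (neg_neg_of_pos (by positivity)) (by positivity)

end Poiseuille

/-- The scalar curl of `W = ν Δu − (u·∇)u` equals `−(ν/|x|) Q'(|x|)` with
`Q(ρ) = ρ(−α₂ + (α₁ − α₂(ρ−δ))/ρ − h(ρ−δ)/ρ²)`; it is nonzero on a thin annulus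
`δ < |x| < δ + r₀`, so `W` is not the gradient of any C¹ function on any open set
meeting that annulus. -/
theorem curl_of_W_nonzero
    (ν δ α₁ α₂ : ℝ) (hν : 0 < ν) (hδ : 0 < δ) (hα₁ : 0 < α₁) (hα₂ : 0 < α₂)
    (W : ℝ × ℝ → ℝ × ℝ)
    (hW : W = fun x =>
      ν • lap (vel δ α₁ α₂) x - fderiv ℝ (vel δ α₁ α₂) x (vel δ α₁ α₂ x))
    (Q : ℝ → ℝ)
    (hQ : Q = fun ρ : ℝ =>
      ρ * (-α₂ + (α₁ - α₂ * (ρ - δ)) / ρ - prof α₁ α₂ (ρ - δ) / ρ ^ 2)) :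
    (∀ x : ℝ × ℝ, x ≠ 0 → scurl W x = -(ν / nrm x) * deriv Q (nrm x))
    ∧ ∃ r₀ : ℝ, 0 < r₀ ∧
        (∀ x : ℝ × ℝ, δ < nrm x → nrm x < δ + r₀ → scurl W x ≠ 0)
        ∧ ∀ U : Set (ℝ × ℝ), IsOpen U →
            (∃ x ∈ U, δ < nrm x ∧ nrm x < δ + r₀) →
            ¬ ∃ p : ℝ × ℝ → ℝ, ContDiffOn ℝ 1 p U ∧ ∀ x ∈ U, grad p x = W x := by
  obtain rfl : W = nsForce ν (rot (angVel δ α₁ α₂)) := hW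
  obtain rfl : Q = poiseuilleQ δ α₁ α₂ := hQ
  have hg (ρ : ℝ) (hρ : 0 < ρ) := hasDerivAt_angVel δ α₁ α₂ hρ.ne'
  have hg₁ (ρ : ℝ) (hρ : 0 < ρ) := hasDerivAt_angVel' δ α₁ α₂ hρ.ne'
  have hQ (ρ : ℝ) (hρ : 0 < ρ) := poiseuilleQ_eq δ α₁ α₂ hρ.ne'
  have hQ' {x : ℝ × ℝ} (hx : x ≠ 0) :
      HasDerivAt (poiseuilleQ δ α₁ α₂) (deriv (poiseuilleQ δ α₁ α₂) (nrm x)) (nrm x) :=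
    (hasDerivAt_poiseuilleQ δ α₁ α₂ (nrm_pos hx).ne').differentiableAt.hasDerivAt
  have hcurl (x : ℝ × ℝ) (hx : x ≠ 0) := scurl_nsForce_rot ν hx hg hg₁ hQ (hQ' hx)
  have hcurl_ne (x : ℝ × ℝ) (hδx : δ < nrm x) : scurl (nsForce ν (rot (angVel δ α₁ α₂))) x ≠ 0 := by
    have hx := ne_zero_of_nrm_pos (hδ.trans hδx)
    rw [hcurl x hx]
    exact (mul_pos_of_neg_of_neg (neg_neg_of_pos (div_pos hν (nrm_pos hx)))
      (deriv_poiseuilleQ_neg δ α₁ α₂ hδ hα₁ hα₂ hδx)).ne'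
  refine ⟨hcurl, δ, hδ, fun x hδx _ => hcurl_ne x hδx, ?_⟩
  rintro U hU ⟨x, hxU, hδx, -⟩ ⟨p, hp, hgrad⟩
  have hx := ne_zero_of_nrm_pos (hδ.trans hδx)
  exact hcurl_ne x hδx (scurl_eq_zero_of_eqOn_grad hU hp hgrad hxU
    (differentiableAt_nsForce_rot ν hx hg hg₁ hQ (hQ' hx)))
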